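/- arXiv:2201.04834 — 4 statements merged into one kernel-verified Lean document; each statement's English description precedes it below -/
import Mathlib

section
/- Let V be a real vector space equipped with two symmetric positive semidefinite bilinear forms a and s; write ‖v‖_a = √(a(v,v)) and ‖v‖_s = √(s(v,v)). Let π : V → V be a linear map and Λ > 0 a real number such that ‖v − π v‖_s² ≤ (1/Λ)·‖v‖_a² for every v ∈ V. Let F : V → ℝ be a linear functional and C ≥ 0 a real number with F(v) ≤ C·‖v‖_s for all v ∈ V. If e ∈ V satisfies π e = 0 and a(e, v) = F(v) for every v ∈ V with π v = 0, then ‖e‖_a ≤ C/√Λ. -/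
/-!
Testing the Galerkin orthogonality with `v = e` itself (allowed since `π e = 0`) gives
`‖e‖_a² = F(e) ≤ C ‖e‖_s`, and on the kernel of `π` the approximation property reads
`‖e‖_s ≤ ‖e‖_a / √Λ`. Hence `‖e‖_a² ≤ (C / √Λ) ‖e‖_a`, and dividing by `‖e‖_a` gives the bound.
-/

theorem Real.sqrt_le_of_le_mul_sqrt {x K : ℝ} (hK : 0 ≤ K) (h : x ≤ K * √x) : √x ≤ K := by
  rcases le_or_gt x 0 with hx | hx
  · rwa [Real.sqrt_eq_zero'.mpr hx]
  · refine le_of_mul_le_mul_right ?_ (Real.sqrt_pos.mpr hx)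
    rwa [Real.mul_self_sqrt hx.le]

theorem sqrt_le_div_sqrt_of_map_eq_zero {V : Type*} [AddCommGroup V] [Module ℝ V]
    {a s : V →ₗ[ℝ] V →ₗ[ℝ] ℝ} {π : V →ₗ[ℝ] V} {Λ : ℝ} (hΛ : 0 ≤ Λ)
    (happrox : ∀ v, s (v - π v) (v - π v) ≤ (1 / Λ) * a v v) {v : V} (hv : π v = 0) :
    √(s v v) ≤ √(a v v) / √Λ := by
  have hsv : s v v ≤ (1 / Λ) * a v v := by simpa [hv] using happrox v
  calc √(s v v) ≤ √((1 / Λ) * a v v) := Real.sqrt_le_sqrt hsv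
    _ = √(a v v) / √Λ := by
      rw [Real.sqrt_mul (by positivity), one_div, Real.sqrt_inv, inv_mul_eq_div]

theorem stmt_0_general {V : Type*} [AddCommGroup V] [Module ℝ V]
    (a s : V →ₗ[ℝ] V →ₗ[ℝ] ℝ)
    (π : V →ₗ[ℝ] V) (Λ : ℝ) (hΛ : 0 < Λ)
    (happrox : ∀ v, s (v - π v) (v - π v) ≤ (1 / Λ) * a v v)
    (F : V →ₗ[ℝ] ℝ) (C : ℝ) (hC : 0 ≤ C)
    (hF : ∀ v, F v ≤ C * Real.sqrt (s v v))
    (e : V) (he : π e = 0)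
    (heq : ∀ v, π v = 0 → a e v = F v) :
    Real.sqrt (a e e) ≤ C / Real.sqrt Λ := by
  refine Real.sqrt_le_of_le_mul_sqrt (by positivity) ?_
  calc a e e = F e := heq e he
    _ ≤ C * √(s e e) := hF e
    _ ≤ C * (√(a e e) / √Λ) :=
      mul_le_mul_of_nonneg_left (sqrt_le_div_sqrt_of_map_eq_zero hΛ.le happrox he) hC
    _ = C / √Λ * √(a e e) := by ring

/-- Abstract core of the global error estimate for CEM-GMsFEM (Theorem on the
global solution): if `π e = 0` and `a(e, v) = F(v)` for every `v` in the kernel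
of `π`, then `‖e‖_a ≤ C / √Λ`. -/
theorem stmt_0 {V : Type*} [AddCommGroup V] [Module ℝ V]
    (a s : V →ₗ[ℝ] V →ₗ[ℝ] ℝ)
    (ha_symm : ∀ u v, a u v = a v u) (ha_nonneg : ∀ v, 0 ≤ a v v)
    (hs_symm : ∀ u v, s u v = s v u) (hs_nonneg : ∀ v, 0 ≤ s v v)
    (π : V →ₗ[ℝ] V) (Λ : ℝ) (hΛ : 0 < Λ)
    (happrox : ∀ v, s (v - π v) (v - π v) ≤ (1 / Λ) * a v v)
    (F : V →ₗ[ℝ] ℝ) (C : ℝ) (hC : 0 ≤ C)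
    (hF : ∀ v, F v ≤ C * Real.sqrt (s v v))
    (e : V) (he : π e = 0)
    (heq : ∀ v, π v = 0 → a e v = F v) :
    Real.sqrt (a e e) ≤ C / Real.sqrt Λ :=
  stmt_0_general a s π Λ hΛ happrox F C hC hF e he heq
end

section
/- Let V be a real vector space equipped with a symmetric positive definite bilinear form a and a symmetric positive semidefinite bilinear form s, and let π : V → V be a linear map. Let v ∈ V and suppose there exists ψ ∈ V satisfying a(ψ, w) + s(π ψ, π w) = s(π v, π w) for all w ∈ V. If a(v, ψ) = 0, then s(π v, π v) = 0. -/
/-! Testing the variational equation against `w = ψ - v` gives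
`a(ψ, ψ) + s(π(ψ - v), π(ψ - v)) = a(ψ, v) = 0`; both terms are nonnegative, so `ψ = 0`, and then
the equation at `w = v` reads `s(π v, π v) = 0`. -/

lemma apply_self_add_apply_sub_sub_eq {V : Type*} [AddCommGroup V] [Module ℝ V]
    (a s : V →ₗ[ℝ] V →ₗ[ℝ] ℝ) (π : V →ₗ[ℝ] V) {v ψ : V}
    (hvar : ∀ w, a ψ w + s (π ψ) (π w) = s (π v) (π w)) :
    a ψ ψ + s (π (ψ - v)) (π (ψ - v)) = a ψ v := by
  have h := hvar (ψ - v)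
  simp only [map_sub, LinearMap.sub_apply] at h ⊢
  linarith

theorem stmt_2_general {V : Type*} [AddCommGroup V] [Module ℝ V]
    (a s : V →ₗ[ℝ] V →ₗ[ℝ] ℝ)
    (ha_symm : ∀ u v, a u v = a v u) (ha_posdef : ∀ v, v ≠ 0 → 0 < a v v)
    (hs_nonneg : ∀ v, 0 ≤ s v v)
    (π : V →ₗ[ℝ] V) (v ψ : V)
    (hvar : ∀ w, a ψ w + s (π ψ) (π w) = s (π v) (π w))
    (horth : a v ψ = 0) :
    s (π v) (π v) = 0 := by
  have henergy := apply_self_add_apply_sub_sub_eq a s π hvar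
  rw [ha_symm ψ v, horth] at henergy
  have hψ : ψ = 0 := by
    by_contra hψ
    linarith [ha_posdef ψ hψ, hs_nonneg (π (ψ - v))]
  simpa [hψ] using (hvar v).symm

/-- Abstract core of the second assertion of the basic orthogonality lemma for
CEM-GMsFEM: if `v` is `a`-orthogonal to the solution `ψ` of the variational
problem with datum `π v`, then `π v` vanishes in the `s`-seminorm. -/
theorem stmt_2 {V : Type*} [AddCommGroup V] [Module ℝ V]
    (a s : V →ₗ[ℝ] V →ₗ[ℝ] ℝ)
    (ha_symm : ∀ u v, a u v = a v u) (ha_posdef : ∀ v, v ≠ 0 → 0 < a v v)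
    (hs_symm : ∀ u v, s u v = s v u) (hs_nonneg : ∀ v, 0 ≤ s v v)
    (π : V →ₗ[ℝ] V) (v ψ : V)
    (hvar : ∀ w, a ψ w + s (π ψ) (π w) = s (π v) (π w))
    (horth : a v ψ = 0) :
    s (π v) (π v) = 0 :=
  stmt_2_general a s ha_symm ha_posdef hs_nonneg π v ψ hvar horth
end

section
/- Let Λ > 0 and set c_*(Λ) = max_{t ∈ [0, π/2]} (cos t + sin t)(Λ^{-1/2} cos t + sin t) and θ = c_*(Λ)/(c_*(Λ) + 1), so 0 < θ < 1. Let (T_m)_{m≥0}, (x_m)_{m≥1}, (y_m)_{m≥1} be sequences of nonnegative real numbers such that for every m ≥ 1: T_m ≤ (x_m + y_m)(Λ^{-1/2} x_m + y_m) and x_m² + y_m² ≤ T_{m−1} − T_m. Then T_m ≤ θ^m · T_0 for all m ≥ 0. -/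
/-!
Writing `(x_m, y_m) = r (cos t, sin t)` with `t ∈ [0, π/2]` gives
`(x_m + y_m)(Λ^{-1/2} x_m + y_m) ≤ c_* (x_m² + y_m²)`, so the two hypotheses combine to
`T_m ≤ c_* (T_{m-1} - T_m)`, i.e. `T_m ≤ θ T_{m-1}`. Iterating gives the decay, and `c_* ≥ 1`
(the value at `t = π/2`) gives `0 < θ < 1`.
-/

open Real Set

lemma exists_polar_of_nonneg {x y : ℝ} (hx : 0 ≤ x) (hy : 0 ≤ y) :
    ∃ r t, t ∈ Icc 0 (π / 2) ∧ x = r * cos t ∧ y = r * sin t := by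
  let z : ℂ := ⟨x, y⟩
  refine ⟨‖z‖, z.arg, ⟨Complex.arg_nonneg_iff.2 hy, Complex.arg_le_pi_div_two_iff.2 (.inl hx)⟩,
    (Complex.norm_mul_cos_arg z).symm, (Complex.norm_mul_sin_arg z).symm⟩

lemma mul_le_mul_sq_add_sq_of_trig_le {a c : ℝ}
    (hub : ∀ t ∈ Icc 0 (π / 2), (cos t + sin t) * (a * cos t + sin t) ≤ c)
    {x y : ℝ} (hx : 0 ≤ x) (hy : 0 ≤ y) :
    (x + y) * (a * x + y) ≤ c * (x ^ 2 + y ^ 2) := by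
  obtain ⟨r, t, ht, rfl, rfl⟩ := exists_polar_of_nonneg hx hy
  calc (r * cos t + r * sin t) * (a * (r * cos t) + r * sin t)
      = r ^ 2 * ((cos t + sin t) * (a * cos t + sin t)) := by ring
    _ ≤ r ^ 2 * c := mul_le_mul_of_nonneg_left (hub t ht) (sq_nonneg r)
    _ = c * ((r * cos t) ^ 2 + (r * sin t) ^ 2) := by
      linear_combination (-(c * r ^ 2)) * sin_sq_add_cos_sq t

lemma le_div_add_one_mul_of_le_mul_sub {c s u : ℝ} (hc : 0 < c + 1) (h : u ≤ c * (s - u)) :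
    u ≤ c / (c + 1) * s := by
  rw [div_mul_eq_mul_div, le_div_iff₀ hc]
  linarith

open Real in
theorem stmt_3_general (Λ : ℝ) (c θ : ℝ)
    (hc : IsGreatest
      ((fun t : ℝ => (cos t + sin t) * ((1 / Real.sqrt Λ) * cos t + sin t)) ''
        Set.Icc 0 (π / 2)) c)
    (hθ : θ = c / (c + 1))
    (T x y : ℕ → ℝ)
    (hx : ∀ m, 0 ≤ x m) (hy : ∀ m, 0 ≤ y m)
    (hbound : ∀ m, 1 ≤ m →
      T m ≤ (x m + y m) * ((1 / Real.sqrt Λ) * x m + y m))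
    (hannulus : ∀ m, 1 ≤ m → x m ^ 2 + y m ^ 2 ≤ T (m - 1) - T m) :
    (0 < θ ∧ θ < 1) ∧ ∀ m, T m ≤ θ ^ m * T 0 := by
  have hub (t) (ht : t ∈ Icc 0 (π / 2)) := hc.2 ⟨t, ht, rfl⟩
  have hc_one : 1 ≤ c := by
    simpa using hub (π / 2) ⟨by positivity, le_rfl⟩
  have hθ_pos : 0 < θ := hθ ▸ by positivity
  have hθ_lt_one : θ < 1 := hθ ▸ (div_lt_one (by positivity)).2 (lt_add_one c)
  refine ⟨⟨hθ_pos, hθ_lt_one⟩, fun m ↦ le_geom hθ_pos.le m fun k _ ↦ ?_⟩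
  have hstep : T (k + 1) ≤ c * (T k - T (k + 1)) :=
    calc T (k + 1) ≤ (x (k + 1) + y (k + 1)) * ((1 / √Λ) * x (k + 1) + y (k + 1)) :=
          hbound (k + 1) k.succ_pos
      _ ≤ c * (x (k + 1) ^ 2 + y (k + 1) ^ 2) :=
          mul_le_mul_sq_add_sq_of_trig_le hub (hx _) (hy _)
      _ ≤ c * (T k - T (k + 1)) :=
          mul_le_mul_of_nonneg_left (hannulus (k + 1) k.succ_pos) (by positivity)
  exact hθ ▸ le_div_add_one_mul_of_le_mul_sub (by positivity) hstep

open Real in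
/-- Quantitative content of the exponential decay lemma for CEM-GMsFEM basis
functions: with `c_*(Λ)` the maximum of `(cos t + sin t)(Λ^{-1/2} cos t + sin t)`
on `[0, π/2]` and `θ = c_*/(c_*+1)`, one has `0 < θ < 1` and the tail energies
`T_m` decay like `θ^m T_0`. -/
theorem stmt_3 (Λ : ℝ) (hΛ : 0 < Λ) (c θ : ℝ)
    (hc : IsGreatest
      ((fun t : ℝ => (cos t + sin t) * ((1 / Real.sqrt Λ) * cos t + sin t)) ''
        Set.Icc 0 (π / 2)) c)
    (hθ : θ = c / (c + 1))
    (T x y : ℕ → ℝ)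
    (hT : ∀ m, 0 ≤ T m) (hx : ∀ m, 0 ≤ x m) (hy : ∀ m, 0 ≤ y m)
    (hbound : ∀ m, 1 ≤ m →
      T m ≤ (x m + y m) * ((1 / Real.sqrt Λ) * x m + y m))
    (hannulus : ∀ m, 1 ≤ m → x m ^ 2 + y m ^ 2 ≤ T (m - 1) - T m) :
    (0 < θ ∧ θ < 1) ∧ ∀ m, T m ≤ θ ^ m * T 0 :=
  stmt_3_general Λ c θ hc hθ T x y hx hy hbound hannulus
end

section
/- Let V be a real vector space equipped with two symmetric positive semidefinite bilinear forms a and s, and let π : V → V be a linear map; write ‖v‖_a = √(a(v,v)) and ‖v‖_s = √(s(v,v)). Let C ≥ 0 and suppose w, φ, φ̂ ∈ V satisfy: (i) a(w, v) + s(π w, π v) = s(π φ, π v) for all v ∈ V; (ii) π φ̂ = π φ; (iii) ‖φ̂‖_a ≤ C·‖π φ‖_s. Then ‖π φ‖_s ≤ C·‖w‖_a + ‖π w‖_s. -/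
/-
Testing the variational identity with `v = φ̂` and using `π φ̂ = π φ` gives
`‖πφ‖_s² = a(w, φ̂) + s(πw, πφ)`. Cauchy–Schwarz in both forms and the bound on `‖φ̂‖_a`
turn this into `‖πφ‖_s² ≤ (C‖w‖_a + ‖πw‖_s) ‖πφ‖_s`, and one divides by `‖πφ‖_s`.
-/

lemma LinearMap.BilinForm.apply_le_sqrt_mul_sqrt {M : Type*} [AddCommGroup M] [Module ℝ M]
    (B : LinearMap.BilinForm ℝ M) (hB : ∀ x y, B x y = B y x) (hs : ∀ x, 0 ≤ B x x)
    (x y : M) : B x y ≤ √(B x x) * √(B y y) := by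
  have hsq : B x y ^ 2 ≤ B x x * B y y := by
    simpa only [sq, hB y x] using B.apply_mul_apply_le_of_forall_zero_le hs x y
  calc B x y ≤ |B x y| := le_abs_self _
    _ ≤ √(B x x * B y y) := Real.abs_le_sqrt hsq
    _ = √(B x x) * √(B y y) := Real.sqrt_mul (hs x) _

lemma le_of_sq_le_mul {x y : ℝ} (hx : 0 ≤ x) (hy : 0 ≤ y) (h : x ^ 2 ≤ y * x) : x ≤ y := by
  rcases hx.eq_or_lt with rfl | hx
  · exact hy
  · exact le_of_mul_le_mul_right (by simpa only [sq] using h) hx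

/-- Key step in the proof of the main a priori error theorem for CEM-GMsFEM:
from `a(w,v) + s(πw,πv) = s(πφ,πv)` for all `v`, together with `π φ̂ = π φ` and
`‖φ̂‖_a ≤ C ‖πφ‖_s`, one gets `‖πφ‖_s ≤ C ‖w‖_a + ‖πw‖_s`. -/
theorem stmt_10 {V : Type*} [AddCommGroup V] [Module ℝ V]
    (a s : V →ₗ[ℝ] V →ₗ[ℝ] ℝ)
    (ha_symm : ∀ u v, a u v = a v u) (ha_nonneg : ∀ v, 0 ≤ a v v)
    (hs_symm : ∀ u v, s u v = s v u) (hs_nonneg : ∀ v, 0 ≤ s v v)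
    (π : V →ₗ[ℝ] V) (C : ℝ) (hC : 0 ≤ C) (w φ φhat : V)
    (hvar : ∀ v, a w v + s (π w) (π v) = s (π φ) (π v))
    (hproj : π φhat = π φ)
    (hbound : Real.sqrt (a φhat φhat) ≤ C * Real.sqrt (s (π φ) (π φ))) :
    Real.sqrt (s (π φ) (π φ)) ≤
      C * Real.sqrt (a w w) + Real.sqrt (s (π w) (π w)) := by
  set N := √(s (π φ) (π φ))
  have htest : N ^ 2 = a w φhat + s (π w) (π φ) := by
    rw [Real.sq_sqrt (hs_nonneg _), ← hproj, hvar φhat, hproj]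
  have hCS_a : a w φhat ≤ √(a w w) * (C * N) :=
    (LinearMap.BilinForm.apply_le_sqrt_mul_sqrt a ha_symm ha_nonneg w φhat).trans
      (mul_le_mul_of_nonneg_left hbound (Real.sqrt_nonneg _))
  have hCS_s : s (π w) (π φ) ≤ √(s (π w) (π w)) * N :=
    LinearMap.BilinForm.apply_le_sqrt_mul_sqrt s hs_symm hs_nonneg (π w) (π φ)
  refine le_of_sq_le_mul (Real.sqrt_nonneg _) (by positivity) ?_
  rw [htest, add_mul]
  linarith
end
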